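/- Let n ∈ ℕ, n ≥ 1, and set ñ = 4n−3. Let F be the ñ×ñ unitary DFT matrix and 𝒮_z : ℂ^n → ℂ^{ñ} the zero-padded symmetrization. Then there exists a constant c > 0 (depending only on ñ) such that for all x₁, x₂ ∈ ℂ^n with (x₁)_0, (x₂)_0 ∈ ℝ, it holds that ‖ |F 𝒮_z(x₁)|² − |F 𝒮_z(x₂)|² ‖ ≥ c · ‖𝒮_z(x₁ − x₂)‖ · ‖𝒮_z(x₁ + x₂)‖. -/

import Mathlib

open scoped BigOperators

/-- Circular convolution on `ℂ^m`: `(u ⊛ v)_k = ∑_l u_l v_{(k-l) mod m}`. -/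
noncomputable def cconv {m : ℕ} (u v : Fin m → ℂ) : Fin m → ℂ :=
  fun k => ∑ l : Fin m, u l * v (k - l)

/-- Circular correlation on `ℂ^m`: `(u ⋆ v)_k = ∑_l u_l conj (v_{(k+l) mod m})`. -/
noncomputable def ccorr {m : ℕ} (u v : Fin m → ℂ) : Fin m → ℂ :=
  fun k => ∑ l : Fin m, u l * (starRingEnd ℂ) (v (k + l))

/-- Euclidean (ℓ²) norm of a vector. -/
noncomputable def euclNorm {m : ℕ} {E : Type*} [SeminormedAddGroup E] (x : Fin m → E) : ℝ :=
  Real.sqrt (∑ i, ‖x i‖ ^ 2)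

/-- Zero padding `ℂ^n → ℂ^m` (entries of `x` followed by zeros). -/
def pad (n m : ℕ) (x : Fin n → ℂ) : Fin m → ℂ :=
  fun k => if h : (k : ℕ) < n then x ⟨k, h⟩ else 0

/-- `x` has at most `s` nonzero entries. -/
def sparse {n : ℕ} (s : ℕ) (x : Fin n → ℂ) : Prop :=
  Set.ncard {i | x i ≠ 0} ≤ s

/-- The unitary DFT matrix `F_{kl} = m^{-1/2} exp(2πi kl/m)`. -/
noncomputable def dft (m : ℕ) : Matrix (Fin m) (Fin m) ℂ :=
  fun k l => ((Real.sqrt m : ℝ) : ℂ)⁻¹ *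
    Complex.exp (2 * (Real.pi : ℂ) * Complex.I * ((k : ℕ) : ℂ) * ((l : ℕ) : ℂ) / (m : ℂ))

/-- Cyclic shift: `(S x)_k = x_{(k-1) mod m}`. -/
def shiftOp {m : ℕ} (x : Fin m → ℂ) : Fin m → ℂ :=
  fun k => x ⟨((k : ℕ) + (m - 1)) % m, Nat.mod_lt _ (by have := k.isLt; omega)⟩

/-- Time reversal: `(Γ x)_k = x_{(-k) mod m}`. -/
def rev {m : ℕ} (u : Fin m → ℂ) : Fin m → ℂ := fun k => u (-k)

/-- Symmetrization `𝒮 : ℂ^n → ℂ^{2n-1}`,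
`𝒮(x) = (x_0, …, x_{n-1}, conj x_{n-1}, …, conj x_1)`. -/
noncomputable def symmetrize (n : ℕ) (x : Fin n → ℂ) : Fin (2 * n - 1) → ℂ :=
  fun k =>
    if h : (k : ℕ) < n then x ⟨k, h⟩
    else (starRingEnd ℂ) (x ⟨2 * n - 1 - (k : ℕ), by have := k.isLt; omega⟩)

/-- Zero-padded symmetrization `𝒮_z : ℂ^n → ℂ^{4n-3}`, `𝒮_z(x) = 𝒮((x, 0_{n-1}))`. -/
noncomputable def symmetrizeZ (n : ℕ) (x : Fin n → ℂ) : Fin (4 * n - 3) → ℂ :=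
  fun k => symmetrize (2 * n - 1) (pad n (2 * n - 1) x) ⟨(k : ℕ), by have := k.isLt; omega⟩

/-- `𝒮_z' : ℂ^n → ℂ^{4n-1}`,
`𝒮_z'(x) = (0_n, x_0, …, x_{n-1}, conj x_{n-1}, …, conj x_0, 0_{n-1})`. -/
noncomputable def symmetrizeZ' (n : ℕ) (x : Fin n → ℂ) : Fin (4 * n - 1) → ℂ :=
  fun k =>
    if _ : (k : ℕ) < n then 0
    else if h2 : (k : ℕ) < 2 * n then x ⟨(k : ℕ) - n, by omega⟩
    else if h3 : (k : ℕ) < 3 * n then (starRingEnd ℂ) (x ⟨3 * n - 1 - (k : ℕ), by omega⟩)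
    else 0

/-!
For real `x₀` the vector `𝒮_z(x)` is conjugate-symmetric, so `F 𝒮_z(x)` is real, and for real
`a, b` one has `(a² - b²)² = (a - b)² (a + b)²`. Since `𝒮_z` is additive, the square of the
left-hand side is `∑ₖ |F 𝒮_z(x₁ - x₂)|ₖ² |F 𝒮_z(x₁ + x₂)|ₖ²`, a continuous function of the pair
that is homogeneous of degree two in each entry. Every `𝒮_z(x)` is supported on a cyclic window
of length `2n - 1` in `ℤ/(4n - 3)`, so its Fourier coefficients are the values of a polynomial of
degree at most `2n - 2` at distinct roots of unity: if `𝒮_z(x) ≠ 0`, at most `2n - 2` of them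
vanish. Two such transforms therefore share a nonzero coefficient, the sum above is positive on
pairs of nonzero window vectors, and its minimum over the product of unit spheres of the window
is the constant.
-/

open Finset Matrix Polynomial ComplexConjugate

section DFT

variable {m : ℕ} [NeZero m]

noncomputable def dftChar (m : ℕ) [NeZero m] : AddChar (Fin m) ℂ where
  toFun a := Complex.exp (2 * Real.pi * Complex.I / m) ^ (a : ℕ)
  map_zero_eq_one' := pow_zero _
  map_add_eq_mul' a b := by
    rw [Fin.val_add, ← pow_eq_pow_mod _
      (Complex.isPrimitiveRoot_exp m (NeZero.ne m)).pow_eq_one, pow_add]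

lemma dftChar_injective : Function.Injective (dftChar m) := fun a b h =>
  Fin.ext <| (Complex.isPrimitiveRoot_exp m (NeZero.ne m)).pow_inj a.isLt b.isLt h

lemma dftChar_ne_zero (a : Fin m) : dftChar m a ≠ 0 := pow_ne_zero _ (Complex.exp_ne_zero _)

lemma dftChar_mul (k j : Fin m) : dftChar m (k * j) = dftChar m k ^ (j : ℕ) := by
  change Complex.exp _ ^ ((k * j : Fin m) : ℕ) = (Complex.exp _ ^ (k : ℕ)) ^ (j : ℕ)
  rw [Fin.val_mul, ← pow_eq_pow_mod _
    (Complex.isPrimitiveRoot_exp m (NeZero.ne m)).pow_eq_one, pow_mul]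

lemma dft_eq_dftChar (k l : Fin m) :
    dft m k l = ((Real.sqrt m : ℝ) : ℂ)⁻¹ * dftChar m (k * l) := by
  change _ = _ * Complex.exp _ ^ ((k * l : Fin m) : ℕ)
  rw [Fin.val_mul, ← pow_eq_pow_mod _
    (Complex.isPrimitiveRoot_exp m (NeZero.ne m)).pow_eq_one, ← Complex.exp_nat_mul, dft]
  congr 2
  push_cast
  ring

lemma conj_dft (k l : Fin m) : conj (dft m k l) = dft m k (-l) := by
  rw [dft_eq_dftChar, dft_eq_dftChar, map_mul, map_inv₀, Complex.conj_ofReal,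
    ← AddChar.map_neg_eq_conj, mul_neg]

lemma dft_mulVec_im_eq_zero {v : Fin m → ℂ} (hv : ∀ l, conj (v (-l)) = v l) (k : Fin m) :
    ((dft m *ᵥ v) k).im = 0 := by
  rw [← Complex.conj_eq_iff_im, mulVec, dotProduct, map_sum]
  refine Fintype.sum_equiv (Equiv.neg (Fin m)) _ _ fun l => ?_
  rw [map_mul, conj_dft, Equiv.neg_apply, ← hv (-l), neg_neg]

lemma dft_mulVec_eq_sum_shift (u : Fin m → ℂ) (c k : Fin m) :
    (dft m *ᵥ u) k = ((Real.sqrt m : ℝ) : ℂ)⁻¹ * dftChar m (-(k * c)) *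
      ∑ j : Fin m, u (j - c) * dftChar m k ^ (j : ℕ) := by
  rw [mulVec, dotProduct, mul_sum]
  refine (Fintype.sum_equiv (Equiv.subRight c) _ _ fun j => ?_).symm
  rw [Equiv.subRight_apply, dft_eq_dftChar, mul_sub, sub_eq_add_neg (k * j),
    AddChar.map_add_eq_mul, dftChar_mul]
  ring

theorem card_dft_mulVec_eq_zero_le {u : Fin m → ℂ} (hu : u ≠ 0) {c : Fin m} {s : ℕ}
    (hsupp : ∀ j : Fin m, s < (j : ℕ) → u (j - c) = 0) :
    #{k | (dft m *ᵥ u) k = 0} ≤ s := by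
  set Q : ℂ[X] := ∑ j : Fin m, C (u (j - c)) * X ^ (j : ℕ)
  have hdeg : Q.natDegree ≤ s := by
    refine natDegree_sum_le_of_forall_le _ _ fun j _ => ?_
    by_cases hj : (j : ℕ) ≤ s
    · exact (natDegree_C_mul_X_pow_le _ _).trans hj
    · simp [hsupp j (by omega)]
  have hQ : Q ≠ 0 := by
    obtain ⟨l, hl⟩ := Function.ne_iff.mp hu
    intro h
    have := congrArg (coeff · ((l + c : Fin m) : ℕ)) h
    simp [Q, finsetSum_coeff, Fin.val_inj] at this
    exact hl this
  by_contra! hcard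
  refine hQ (eq_zero_of_natDegree_lt_card_of_eval_eq_zero Q
    (f := fun k : {k // (dft m *ᵥ u) k = 0} => dftChar m k)
    (dftChar_injective.comp Subtype.val_injective) (fun ⟨k, hk⟩ => ?_) ?_)
  · rw [dft_mulVec_eq_sum_shift u c k] at hk
    simpa [Q, eval_finsetSum, dftChar_ne_zero, NeZero.ne] using hk
  · rw [Fintype.card_subtype]
    exact hdeg.trans_lt hcard

theorem exists_dft_mulVec_ne_zero_and_ne_zero {u w : Fin m → ℂ} (hu : u ≠ 0) (hw : w ≠ 0)
    {c c' : Fin m} {s t : ℕ} (hsu : ∀ j : Fin m, s < (j : ℕ) → u (j - c) = 0)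
    (htw : ∀ j : Fin m, t < (j : ℕ) → w (j - c') = 0) (hst : s + t < m) :
    ∃ k, (dft m *ᵥ u) k ≠ 0 ∧ (dft m *ᵥ w) k ≠ 0 := by
  have hu' := card_dft_mulVec_eq_zero_le hu hsu
  have hw' := card_dft_mulVec_eq_zero_le hw htw
  have hcu := card_filter_add_card_filter_not (s := univ) fun k => (dft m *ᵥ u) k = 0
  have hcw := card_filter_add_card_filter_not (s := univ) fun k => (dft m *ᵥ w) k = 0
  rw [card_univ, Fintype.card_fin] at hcu hcw
  obtain ⟨k, hk⟩ := inter_nonempty_of_card_lt_card_add_card (subset_univ _) (subset_univ _)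
    (by rw [card_univ, Fintype.card_fin]; omega :
      #(univ : Finset (Fin m)) < #{k | ¬(dft m *ᵥ u) k = 0} + #{k | ¬(dft m *ᵥ w) k = 0})
  exact ⟨k, by simpa using hk⟩

end DFT

theorem Submodule.exists_pos_mul_sq_norm_mul_sq_norm_le {E : Type*} [NormedAddCommGroup E]
    [NormedSpace ℝ E] [FiniteDimensional ℝ E] (W : Submodule ℝ E) {f : E → E → ℝ}
    (hf : Continuous (Function.uncurry f))
    (hsmul : ∀ (a b : ℝ) (x y : E), f (a • x) (b • y) = a ^ 2 * b ^ 2 * f x y)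
    (hpos : ∀ x ∈ W, ∀ y ∈ W, x ≠ 0 → y ≠ 0 → 0 < f x y) :
    ∃ c > 0, ∀ x ∈ W, ∀ y ∈ W, c * ‖x‖ ^ 2 * ‖y‖ ^ 2 ≤ f x y := by
  set S : Set E := Metric.sphere 0 1 ∩ W
  have hS : IsCompact S :=
    haveI := FiniteDimensional.proper_real E
    (isCompact_sphere 0 1).inter_right W.closed_of_finiteDimensional
  have hnormalize : ∀ x ∈ W, x ≠ 0 → ‖x‖⁻¹ • x ∈ S := fun x hx hx0 =>
    ⟨by simp [norm_smul, hx0], W.smul_mem _ hx⟩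
  have hbound : ∀ c, (∀ p ∈ S ×ˢ S, c ≤ f p.1 p.2) →
      ∀ x ∈ W, ∀ y ∈ W, c * ‖x‖ ^ 2 * ‖y‖ ^ 2 ≤ f x y := by
    intro c hc x hx y hy
    rcases eq_or_ne x 0 with rfl | hx0
    · simpa using (hsmul 0 1 0 y).ge
    rcases eq_or_ne y 0 with rfl | hy0
    · simpa using (hsmul 1 0 x 0).ge
    have := hc (‖x‖⁻¹ • x, ‖y‖⁻¹ • y) ⟨hnormalize x hx hx0, hnormalize y hy hy0⟩
    rw [hsmul, inv_pow, inv_pow, ← mul_inv, inv_mul_eq_div, le_div_iff₀ (by positivity),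
      ← mul_assoc] at this
    exact this
  rcases (S ×ˢ S).eq_empty_or_nonempty with hempty | hne
  · exact ⟨1, one_pos, hbound 1 (by simp [hempty])⟩
  obtain ⟨p, ⟨hp₁, hp₂⟩, hmin⟩ := (hS.prod hS).exists_isMinOn hne hf.continuousOn
  have hne_zero : ∀ x ∈ S, x ≠ 0 := fun x hx h => by simpa [h] using hx.1
  exact ⟨f p.1 p.2, hpos _ hp₁.2 _ hp₂.2 (hne_zero _ hp₁) (hne_zero _ hp₂), hbound _ hmin⟩

def cyclicWindow (m s : ℕ) (c : Fin m) : Submodule ℝ (EuclideanSpace ℂ (Fin m)) where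
  carrier := {u | ∀ j : Fin m, s < (j : ℕ) → u (j - c) = 0}
  add_mem' hu hw j hj := by simp [hu j hj, hw j hj]
  zero_mem' _ _ := rfl
  smul_mem' a u hu j hj := by simp [hu j hj]

noncomputable def fourierOverlap (m : ℕ) (u w : Fin m → ℂ) : ℝ :=
  ∑ k, ‖(dft m *ᵥ u) k‖ ^ 2 * ‖(dft m *ᵥ w) k‖ ^ 2

section FourierOverlap

variable {m : ℕ}

lemma continuous_fourierOverlap :
    Continuous fun p : EuclideanSpace ℂ (Fin m) × EuclideanSpace ℂ (Fin m) =>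
      fourierOverlap m p.1 p.2 := by
  unfold fourierOverlap
  fun_prop

lemma fourierOverlap_smul_smul (a b : ℝ) (u w : Fin m → ℂ) :
    fourierOverlap m (a • u) (b • w) = a ^ 2 * b ^ 2 * fourierOverlap m u w := by
  simp only [fourierOverlap, mulVec_smul, mul_sum, Pi.smul_apply, norm_smul, Real.norm_eq_abs,
    mul_pow, sq_abs]
  exact sum_congr rfl fun k _ => by ring

lemma fourierOverlap_pos [NeZero m] {s t : ℕ} {c c' : Fin m} {u w : EuclideanSpace ℂ (Fin m)}
    (hu : u ∈ cyclicWindow m s c) (hw : w ∈ cyclicWindow m t c') (hu0 : u ≠ 0) (hw0 : w ≠ 0)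
    (hst : s + t < m) : 0 < fourierOverlap m u w := by
  obtain ⟨k, huk, hwk⟩ := exists_dft_mulVec_ne_zero_and_ne_zero (u := u) (w := w)
    (by simpa using hu0) (by simpa using hw0) hu hw hst
  exact sum_pos' (fun k _ => by positivity) ⟨k, mem_univ _, by positivity⟩

end FourierOverlap

section SymmetrizeZ

variable {n : ℕ}

lemma symmetrizeZ_apply (x : Fin n → ℂ) (k : Fin (4 * n - 3)) :
    symmetrizeZ n x k =
      if h : (k : ℕ) < n then x ⟨k, h⟩
      else if h : 3 * n - 2 ≤ (k : ℕ) then conj (x ⟨4 * n - 3 - k, by have := k.isLt; omega⟩)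
      else 0 := by
  have := k.isLt
  simp only [symmetrizeZ, symmetrize, pad]
  split_ifs <;> first | rfl | omega | exact map_zero _ | (congr 3; omega)

lemma symmetrizeZ_add (x y : Fin n → ℂ) :
    symmetrizeZ n (x + y) = symmetrizeZ n x + symmetrizeZ n y := by
  ext k
  simp only [symmetrizeZ_apply, Pi.add_apply]
  split_ifs <;> simp

lemma symmetrizeZ_sub (x y : Fin n → ℂ) :
    symmetrizeZ n (x - y) = symmetrizeZ n x - symmetrizeZ n y := by
  ext k
  simp only [symmetrizeZ_apply, Pi.sub_apply]
  split_ifs <;> simp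

lemma conj_symmetrizeZ_neg (hn : 0 < n) {x : Fin n → ℂ} (hx : (x ⟨0, hn⟩).im = 0)
    (l : Fin (4 * n - 3)) : conj (symmetrizeZ n x (-l)) = symmetrizeZ n x l := by
  have hl := l.isLt
  rcases Nat.eq_zero_or_pos (l : ℕ) with h0 | hpos
  · have hl0 : -l = l := by ext; simp [Fin.val_neg', h0]
    rw [hl0, symmetrizeZ_apply, dif_pos (by omega)]
    exact Complex.conj_eq_iff_im.mpr (by simpa [h0] using hx)
  · have hneg : ((-l : Fin (4 * n - 3)) : ℕ) = 4 * n - 3 - l := by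
      rw [Fin.val_neg', Nat.mod_eq_of_lt (by omega)]
    simp only [symmetrizeZ_apply, hneg]
    split_ifs <;>
      first | omega | rfl | exact map_zero _ | (rw [Complex.conj_conj]; congr 2; omega)

lemma symmetrizeZ_mem_cyclicWindow (hn : 0 < n) (x : Fin n → ℂ) :
    WithLp.toLp 2 (symmetrizeZ n x) ∈
      cyclicWindow (4 * n - 3) (2 * n - 2) ⟨n - 1, by omega⟩ := by
  intro j hj
  have hval : ((j - ⟨n - 1, by omega⟩ : Fin (4 * n - 3)) : ℕ) = j - (n - 1) :=
    Fin.sub_val_of_le (Fin.mk_le_of_le_val (by omega))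
  simp only [symmetrizeZ_apply, hval]
  split_ifs <;> first | omega | rfl

end SymmetrizeZ

lemma euclNorm_eq_norm_toLp {𝕜 : Type*} [RCLike 𝕜] {m : ℕ} (x : Fin m → 𝕜) :
    euclNorm x = ‖(WithLp.toLp 2 x : EuclideanSpace 𝕜 (Fin m))‖ := by
  rw [EuclideanSpace.norm_eq]
  rfl

lemma sq_norm_sub_sq_norm_sq_of_im_eq_zero {z w : ℂ} (hz : z.im = 0) (hw : w.im = 0) :
    (‖z‖ ^ 2 - ‖w‖ ^ 2) ^ 2 = ‖z - w‖ ^ 2 * ‖z + w‖ ^ 2 := by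
  simp only [Complex.sq_norm, Complex.normSq_apply, Complex.sub_re, Complex.sub_im,
    Complex.add_re, Complex.add_im, hz, hw]
  ring

lemma euclNorm_sq_norm_sub_eq_sqrt_fourierOverlap {m : ℕ} {u v : Fin m → ℂ}
    (hu : ∀ k, ((dft m *ᵥ u) k).im = 0) (hv : ∀ k, ((dft m *ᵥ v) k).im = 0) :
    euclNorm (fun k => ‖(dft m *ᵥ u) k‖ ^ 2 - ‖(dft m *ᵥ v) k‖ ^ 2) =
      √(fourierOverlap m (u - v) (u + v)) := by
  rw [euclNorm, fourierOverlap, mulVec_sub, mulVec_add]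
  congr 1
  refine sum_congr rfl fun k _ => ?_
  rw [Real.norm_eq_abs, sq_abs]
  exact sq_norm_sub_sq_norm_sq_of_im_eq_zero (hu k) (hv k)

/-- Stability of the magnitude Fourier measurements of zero-padded symmetrized
vectors, in terms of `‖𝒮_z(x₁ ∓ x₂)‖`. -/
theorem stable_recovery_symmetrizeZ (n : ℕ) (hn : 0 < n) :
    ∃ c : ℝ, 0 < c ∧ ∀ x₁ x₂ : Fin n → ℂ,
      (x₁ ⟨0, hn⟩).im = 0 → (x₂ ⟨0, hn⟩).im = 0 →
      c * euclNorm (symmetrizeZ n (x₁ - x₂)) * euclNorm (symmetrizeZ n (x₁ + x₂)) ≤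
        euclNorm (fun k => ‖(dft (4 * n - 3)).mulVec (symmetrizeZ n x₁) k‖ ^ 2 -
          ‖(dft (4 * n - 3)).mulVec (symmetrizeZ n x₂) k‖ ^ 2) := by
  have : NeZero (4 * n - 3) := ⟨by omega⟩
  obtain ⟨c, hc, hlow⟩ := (cyclicWindow (4 * n - 3) (2 * n - 2) ⟨n - 1, by omega⟩)
    |>.exists_pos_mul_sq_norm_mul_sq_norm_le continuous_fourierOverlap
      (fun a b u w => fourierOverlap_smul_smul a b u w)
      (fun u hu w hw hu0 hw0 => fourierOverlap_pos hu hw hu0 hw0 (by omega))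
  refine ⟨√c, Real.sqrt_pos.2 hc, fun x₁ x₂ h₁ h₂ => ?_⟩
  have hreal : ∀ x : Fin n → ℂ, (x ⟨0, hn⟩).im = 0 →
      ∀ k, ((dft (4 * n - 3) *ᵥ symmetrizeZ n x) k).im = 0 := fun x hx =>
    dft_mulVec_im_eq_zero (conj_symmetrizeZ_neg hn hx)
  rw [euclNorm_sq_norm_sub_eq_sqrt_fourierOverlap (hreal x₁ h₁) (hreal x₂ h₂),
    ← symmetrizeZ_sub, ← symmetrizeZ_add, euclNorm_eq_norm_toLp, euclNorm_eq_norm_toLp]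
  refine Real.le_sqrt_of_sq_le ?_
  rw [mul_pow, mul_pow, Real.sq_sqrt hc.le]
  exact hlow _ (symmetrizeZ_mem_cyclicWindow hn _) _ (symmetrizeZ_mem_cyclicWindow hn _)
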